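/- Let G be a simple graph on a finite vertex type V, k a field, and w : V → ℝ a weight function with w(v) ≥ 0 for all v. For f : V → k set wt(f) := ∑_{v ∈ supp(f)} w(v), where supp(f) := {v | f(v) ≠ 0}. Let n be the number of connected components of G and let Z(G,k) := {f : V → k | for all u v, G.Adj u v → f(u) = f(v)}. Then: (i) every linearly independent family f : Fin n → (V → k) with f_j ∈ Z(G,k) for all j satisfies ∑_j wt(f_j) ≥ ∑_{v ∈ V} w(v); and (ii) if moreover w(v) > 0 for all v and ∑_j wt(f_j) = ∑_{v ∈ V} w(v), then each f_j is a nonzero scalar multiple of the indicator function of some connected component of G. -/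
import Mathlib


/-- The space `Z(G,k)` of graph-theoretic 0-cocycles: functions `V → k` that take
equal values on adjacent vertices of `G`. -/
def cocycleSpace {V : Type*} (G : SimpleGraph V) (k : Type*) [Field k] :
    Submodule k (V → k) where
  carrier := {f | ∀ u v, G.Adj u v → f u = f v}
  add_mem' := by
    intro f g hf hg u v h
    simp only [Pi.add_apply, hf u v h, hg u v h]
  zero_mem' := by intro u v h; rfl
  smul_mem' := by
    intro a f hf u v h
    simp only [Pi.smul_apply, hf u v h]

open Classical in
/-- The indicator function `𝟙_c : V → k` of a connected component `c` of `G`. -/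
noncomputable def compIndicator {V : Type*} (G : SimpleGraph V) (k : Type*) [Field k]
    (c : G.ConnectedComponent) : V → k :=
  fun v => if G.connectedComponentMk v = c then 1 else 0

open Classical in
/-- The weight of a vector `f : V → k` w.r.t. a weight function `w : V → ℝ`:
the sum of `w v` over the support `{v | f v ≠ 0}` of `f`. -/
noncomputable def wt {k V : Type*} [Field k] [Fintype V] (w : V → ℝ) (f : V → k) : ℝ :=
  ∑ v ∈ Finset.univ.filter (fun v => f v ≠ 0), w v


open Classical

private lemma cocycle_const' {V : Type*} {G : SimpleGraph V} {k : Type*} [Field k]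
    {g : V → k} (hg : g ∈ cocycleSpace G k) {u v : V} (h : G.Reachable u v) :
    g u = g v := by
  obtain ⟨p⟩ := h
  induction p with
  | nil => rfl
  | cons h p ih => exact (hg _ _ h).trans ih

/-- Let `w : V → ℝ` be a nonnegative weight function and let `n`
be the number of connected components of `G`. (i) Every linearly independent family
of `n` cocycles in `Z(G,k)` has total weight at least `∑ v, w v`; (ii) if the
weights are strictly positive and equality holds, each member of the family is a
nonzero scalar multiple of the indicator function of a connected component. -/
theorem cocycle_basis_weight_optimality
    {V : Type*} [Fintype V] (G : SimpleGraph V) (k : Type*) [Field k]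
    (w : V → ℝ) (hw : ∀ v, 0 ≤ w v)
    (f : Fin (Nat.card G.ConnectedComponent) → (V → k))
    (hli : LinearIndependent k f)
    (hmem : ∀ j, f j ∈ cocycleSpace G k) :
    (∑ v, w v) ≤ (∑ j, wt w (f j)) ∧
      ((∀ v, 0 < w v) → (∑ j, wt w (f j)) = (∑ v, w v) →
        ∀ j, ∃ (c : G.ConnectedComponent) (a : k),
          a ≠ 0 ∧ f j = a • compIndicator G k c) := by

  classical
  have : Fintype G.ConnectedComponent := Fintype.ofFinite _
  have hn : Nat.card G.ConnectedComponent = Fintype.card G.ConnectedComponent :=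
    Nat.card_eq_fintype_card
  -- choose representatives
  choose s hs using fun c : G.ConnectedComponent => c.exists_rep
  -- constancy on components
  have hconst : ∀ j (v : V), f j v = f j (s (G.connectedComponentMk v)) := by
    intro j v
    exact cocycle_const' (hmem j)
      (SimpleGraph.ConnectedComponent.exact (hs (G.connectedComponentMk v)).symm)
  -- the evaluation linear map
  let L : (V → k) →ₗ[k] (G.ConnectedComponent → k) :=
    { toFun := fun g c => g (s c)
      map_add' := fun _ _ => rfl
      map_smul' := fun _ _ => rfl }
  have hLf : LinearIndependent k (fun j => L (f j)) := by
    rw [Fintype.linearIndependent_iff]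
    intro a ha
    have hg : (∑ j, a j • f j) ∈ cocycleSpace G k :=
      Submodule.sum_mem _ fun j _ => Submodule.smul_mem _ _ (hmem j)
    have hz : (∑ j, a j • f j) = 0 := by
      funext v
      have h1 : (∑ j, a j • f j) (s (G.connectedComponentMk v)) = 0 := by
        have := congrFun ha (G.connectedComponentMk v)
        simpa [L, Finset.sum_apply] using this
      have h2 := cocycle_const' hg
        (SimpleGraph.ConnectedComponent.exact (hs (G.connectedComponentMk v)).symm)
      rw [Pi.zero_apply]
      exact h2.trans h1
    exact Fintype.linearIndependent_iff.mp hli a hz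
  -- each component carries some nonvanishing f j
  have hex : ∀ c : G.ConnectedComponent, ∃ j, f j (s c) ≠ 0 := by
    intro c
    by_contra hcon
    push_neg at hcon
    have : Nonempty (Fin (Nat.card G.ConnectedComponent)) :=
      ⟨⟨0, by rw [hn]; exact Fintype.card_pos_iff.mpr ⟨c⟩⟩⟩
    have hcard : Fintype.card (Fin (Nat.card G.ConnectedComponent)) =
        Module.finrank k (G.ConnectedComponent → k) := by
      simp [hn]
    let b := basisOfLinearIndependentOfCardEqFinrank hLf hcard
    have hb : ⇑b = fun j => L (f j) :=
      coe_basisOfLinearIndependentOfCardEqFinrank _ _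
    have hspan : Submodule.span k (Set.range fun j => L (f j)) = ⊤ := by
      rw [← hb]; exact b.span_eq
    have hle : Submodule.span k (Set.range fun j => L (f j)) ≤
        LinearMap.ker (LinearMap.proj (R := k) (φ := fun _ : G.ConnectedComponent => k) c) := by
      rw [Submodule.span_le]
      rintro _ ⟨j, rfl⟩
      simpa [LinearMap.mem_ker, L] using hcon j
    rw [hspan, top_le_iff] at hle
    have h1 : (Pi.single c 1 : G.ConnectedComponent → k) ∈
        LinearMap.ker (LinearMap.proj (R := k) (φ := fun _ : G.ConnectedComponent => k) c) := by
      rw [hle]; trivial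
    simp [LinearMap.mem_ker] at h1
  have hexv : ∀ v : V, ∃ j, f j v ≠ 0 := by
    intro v
    obtain ⟨j, hj⟩ := hex (G.connectedComponentMk v)
    exact ⟨j, by rw [hconst j v]; exact hj⟩
  -- rewrite total weight as a vertex sum
  have hsum : (∑ j, wt w (f j)) =
      ∑ v, ((Finset.univ.filter (fun j => f j v ≠ 0)).card : ℝ) * w v := by
    unfold wt
    simp_rw [Finset.sum_filter]
    rw [Finset.sum_comm]
    refine Finset.sum_congr rfl fun v _ => ?_
    rw [← Finset.sum_filter, Finset.sum_const, nsmul_eq_mul]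
  have hge : ∀ v : V, w v ≤ ((Finset.univ.filter (fun j => f j v ≠ 0)).card : ℝ) * w v := by
    intro v
    obtain ⟨j, hj⟩ := hexv v
    have hne : (Finset.univ.filter (fun j => f j v ≠ 0)).Nonempty :=
      ⟨j, Finset.mem_filter.mpr ⟨Finset.mem_univ _, hj⟩⟩
    have h1 : (1 : ℝ) ≤ ((Finset.univ.filter (fun j => f j v ≠ 0)).card : ℝ) := by
      exact_mod_cast Finset.card_pos.mpr hne
    nlinarith [hw v]
  constructor
  · rw [hsum]
    exact Finset.sum_le_sum fun v _ => hge v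
  · intro hw' heq
    -- each vertex has exactly one nonvanishing f j
    have hone : ∀ v : V, (Finset.univ.filter (fun j => f j v ≠ 0)).card = 1 := by
      by_contra hcon
      push_neg at hcon
      obtain ⟨v0, hv0⟩ := hcon
      have hlt : w v0 < ((Finset.univ.filter (fun j => f j v0 ≠ 0)).card : ℝ) * w v0 := by
        obtain ⟨j, hj⟩ := hexv v0
        have hne : (Finset.univ.filter (fun j => f j v0 ≠ 0)).Nonempty :=
          ⟨j, Finset.mem_filter.mpr ⟨Finset.mem_univ _, hj⟩⟩
        have hpos := Finset.card_pos.mpr hne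
        have h2 : 2 ≤ (Finset.univ.filter (fun j => f j v0 ≠ 0)).card := by omega
        have h2' : (2 : ℝ) ≤ ((Finset.univ.filter (fun j => f j v0 ≠ 0)).card : ℝ) := by
          exact_mod_cast h2
        nlinarith [hw' v0]
      have : (∑ v, w v) < ∑ v, ((Finset.univ.filter (fun j => f j v ≠ 0)).card : ℝ) * w v :=
        Finset.sum_lt_sum (fun v _ => hge v) ⟨v0, Finset.mem_univ _, hlt⟩
      rw [← hsum, heq] at this
      exact lt_irrefl _ this
    have huniq : ∀ v : V, ∃ j, Finset.univ.filter (fun j => f j v ≠ 0) = {j} :=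
      fun v => Finset.card_eq_one.mp (hone v)
    choose φ0 hφ0 using huniq
    have key : ∀ (v : V) j, f j v ≠ 0 → j = φ0 v := by
      intro v j h
      have : j ∈ Finset.univ.filter (fun j => f j v ≠ 0) :=
        Finset.mem_filter.mpr ⟨Finset.mem_univ _, h⟩
      rw [hφ0 v] at this
      exact Finset.mem_singleton.mp this
    -- the component-to-index map
    set φ : G.ConnectedComponent → Fin (Nat.card G.ConnectedComponent) :=
      fun c => φ0 (s c) with hφdef
    have hsurj : Function.Surjective φ := by
      intro j
      have hne : f j ≠ 0 := hli.ne_zero j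
      obtain ⟨v, hv⟩ : ∃ v, f j v ≠ 0 := by
        by_contra hcc
        push_neg at hcc
        exact hne (funext hcc)
      refine ⟨G.connectedComponentMk v, ?_⟩
      have : f j (s (G.connectedComponentMk v)) ≠ 0 := by
        rw [← hconst j v]; exact hv
      exact (key _ j this).symm
    have hbij : Function.Bijective φ :=
      (Fintype.bijective_iff_surjective_and_card φ).mpr ⟨hsurj, by simp [hn]⟩
    intro j
    have hne : f j ≠ 0 := hli.ne_zero j
    obtain ⟨v0, hv0⟩ : ∃ v, f j v ≠ 0 := by
      by_contra hcc
      push_neg at hcc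
      exact hne (funext hcc)
    refine ⟨G.connectedComponentMk v0, f j v0, hv0, ?_⟩
    have hφv0 : φ (G.connectedComponentMk v0) = j := by
      have : f j (s (G.connectedComponentMk v0)) ≠ 0 := by
        rw [← hconst j v0]; exact hv0
      exact (key _ j this).symm
    funext v
    by_cases hc : G.connectedComponentMk v = G.connectedComponentMk v0
    · have hval : f j v = f j v0 :=
        cocycle_const' (hmem j) (SimpleGraph.ConnectedComponent.exact hc)
      simp [compIndicator, hc, hval]
    · simp only [Pi.smul_apply, compIndicator, if_neg hc, smul_eq_mul, mul_zero]
      by_contra hvne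
      have : f j (s (G.connectedComponentMk v)) ≠ 0 := by
        rw [← hconst j v]; exact hvne
      have hφv : φ (G.connectedComponentMk v) = j := (key _ j this).symm
      exact hc (hbij.injective (hφv.trans hφv0.symm))
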